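/- arXiv:2601.13743 — 4 statements merged into one kernel-verified Lean document; each statement's English description precedes it below -/
import Mathlib

section
/- Soundness of satisfaction classes (Lemma 1, satisfaction part): Let φ be an STL formula with a classification criterion fixed as in the context, let ψ ∈ Cls⁺(φ) be a satisfaction class, and let w be a signal. If w ∈ S(ψ), i.e. there exists a valuation θ ∈ Θ such that w ⊨ ψ(θ), then w ⊨ φ. -/
namespace STLClass

abbrev Signal (N : ℕ) := ℝ → Fin N → ℝ

def shift {N : ℕ} (w : Signal N) (t : ℝ) : Signal N := fun t' => w (t + t')

inductive STL (N : ℕ) : Type where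
  | atom (f : (Fin N → ℝ) → ℝ)
  | falsum
  | not (φ : STL N)
  | and (φ₁ φ₂ : STL N)
  | or (φ₁ φ₂ : STL N)
  | always (a b : ℝ) (φ : STL N)
  | event (a b : ℝ) (φ : STL N)
  | untl (a b : ℝ) (φ₁ φ₂ : STL N)

def STL.top {N : ℕ} : STL N := .not .falsum

noncomputable def robust {N : ℕ} : STL N → Signal N → EReal
  | .atom f, w => ((f (w 0) : ℝ) : EReal)
  | .falsum, _ => ⊥
  | .not φ, w => - robust φ w
  | .and φ₁ φ₂, w => min (robust φ₁ w) (robust φ₂ w)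
  | .or φ₁ φ₂, w => max (robust φ₁ w) (robust φ₂ w)
  | .always a b φ, w => ⨅ t : Set.Icc a b, robust φ (shift w t.1)
  | .event a b φ, w => ⨆ t : Set.Icc a b, robust φ (shift w t.1)
  | .untl a b φ₁ φ₂, w =>
      ⨆ t : Set.Icc a b,
        min (robust φ₂ (shift w t.1)) (⨅ t' : Set.Ico (0 : ℝ) t.1, robust φ₁ (shift w t'.1))

def Sat {N : ℕ} (w : Signal N) (φ : STL N) : Prop := 0 < robust φ w

def Vio {N : ℕ} (w : Signal N) (φ : STL N) : Prop := robust φ w < 0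

/-- An STL formula together with a classification criterion: each temporal operator is
annotated with a natural number `k`, meaning that its interval is split into `k + 1`
consecutive segments (so the "positive integer" of the criterion is `k + 1`). -/
inductive AForm (N : ℕ) : Type where
  | atom (f : (Fin N → ℝ) → ℝ)
  | falsum
  | not (φ : AForm N)
  | and (φ₁ φ₂ : AForm N)
  | or (φ₁ φ₂ : AForm N)
  | always (a b : ℝ) (k : ℕ) (φ : AForm N)
  | event (a b : ℝ) (k : ℕ) (φ : AForm N)
  | untl (a b : ℝ) (k : ℕ) (φ₁ φ₂ : AForm N)

/-- The underlying STL formula of an annotated formula. -/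
def AForm.toSTL {N : ℕ} : AForm N → STL N
  | .atom f => .atom f
  | .falsum => .falsum
  | .not φ => .not φ.toSTL
  | .and φ₁ φ₂ => .and φ₁.toSTL φ₂.toSTL
  | .or φ₁ φ₂ => .or φ₁.toSTL φ₂.toSTL
  | .always a b _ φ => .always a b φ.toSTL
  | .event a b _ φ => .event a b φ.toSTL
  | .untl a b _ φ₁ φ₂ => .untl a b φ₁.toSTL φ₂.toSTL

/-- Well-formedness: every temporal interval `[a, b]` satisfies `0 ≤ a < b`. -/
def AForm.WF {N : ℕ} : AForm N → Prop
  | .atom _ => True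
  | .falsum => True
  | .not φ => φ.WF
  | .and φ₁ φ₂ => φ₁.WF ∧ φ₂.WF
  | .or φ₁ φ₂ => φ₁.WF ∧ φ₂.WF
  | .always a b _ φ => 0 ≤ a ∧ a < b ∧ φ.WF
  | .event a b _ φ => 0 ≤ a ∧ a < b ∧ φ.WF
  | .untl a b _ φ₁ φ₂ => 0 ≤ a ∧ a < b ∧ φ₁.WF ∧ φ₂.WF

/-- A split of the interval `[a, b]` into `n` consecutive nonsingular segments:
`n + 1` strictly increasing points starting at `a` and ending at `b`.  The segment
`i` is `[pts i.castSucc, pts i.succ]`. -/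
structure Split (a b : ℝ) (n : ℕ) : Type where
  pts : Fin (n + 1) → ℝ
  strictMono : StrictMono pts
  first : pts 0 = a
  last : pts (Fin.last n) = b

/-- The valuation space `Θ` of an annotated formula: a choice of admissible breakpoints
for each temporal subformula. -/
def Val {N : ℕ} : AForm N → Type
  | .atom _ => PUnit
  | .falsum => PUnit
  | .not φ => Val φ
  | .and φ₁ φ₂ => Val φ₁ × Val φ₂
  | .or φ₁ φ₂ => Val φ₁ × Val φ₂
  | .always a b k φ => Split a b (k + 1) × Val φ
  | .event a b k φ => Split a b (k + 1) × Val φ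
  | .untl a b k φ₁ φ₂ => Split a b (k + 1) × Val φ₁ × Val φ₂

/-- Finite conjunction of a list of STL formulas (empty conjunction is `⊤`). -/
def listAnd {N : ℕ} : List (STL N) → STL N
  | [] => STL.top
  | [φ] => φ
  | φ :: φ' :: rest => .and φ (listAnd (φ' :: rest))

/-- Finite disjunction of a list of STL formulas (empty disjunction is `⊥`). -/
def listOr {N : ℕ} : List (STL N) → STL N
  | [] => .falsum
  | [φ] => φ
  | φ :: φ' :: rest => .or φ (listOr (φ' :: rest))

/-- `⋀_{i} f i`. -/
def iAnd {N : ℕ} {k : ℕ} (f : Fin k → STL N) : STL N := listAnd (List.ofFn f)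

/-- `⋁_{i} f i`. -/
def iOr {N : ℕ} {k : ℕ} (f : Fin k → STL N) : STL N := listOr (List.ofFn f)

/-- `Cls true φ` is the set `Cls⁺(φ)` of satisfaction classes and `Cls false φ` is the
set `Cls⁻(φ)` of violation classes; a class is represented by its instantiation map
`Θ → STL N` sending a valuation `θ` to the STL formula `ψ(θ)`. -/
def Cls {N : ℕ} : Bool → (φ : AForm N) → Set (Val φ → STL N)
  | b, .atom f =>
      {fun _ => if b then STL.falsum else STL.top, fun _ => STL.atom f}
  | _, .falsum => {fun _ => STL.falsum}
  | b, .not φ =>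
      {c | ∃ ψ ∈ Cls (!b) φ, c = fun θ => STL.not (ψ θ)}
  | b, .and φ₁ φ₂ =>
      {c | ∃ ψ₁ ∈ Cls b φ₁, ∃ ψ₂ ∈ Cls b φ₂,
        c = fun θ => STL.and (ψ₁ θ.1) (ψ₂ θ.2)}
  | b, .or φ₁ φ₂ =>
      {c | ∃ ψ₁ ∈ Cls b φ₁, ∃ ψ₂ ∈ Cls b φ₂,
        c = fun θ => STL.or (ψ₁ θ.1) (ψ₂ θ.2)}
  | b, .always _ _ k φ =>
      {c | ∃ ψ : Fin (k + 1) → Val φ → STL N, (∀ i, ψ i ∈ Cls b φ) ∧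
        c = fun θ => iAnd fun i : Fin (k + 1) =>
          STL.always (θ.1.pts i.castSucc) (θ.1.pts i.succ) (ψ i θ.2)}
  | b, .event _ _ k φ =>
      {c | ∃ ψ : Fin (k + 1) → Val φ → STL N, (∀ i, ψ i ∈ Cls b φ) ∧
        c = fun θ => iOr fun i : Fin (k + 1) =>
          STL.event (θ.1.pts i.castSucc) (θ.1.pts i.succ) (ψ i θ.2)}
  | b, .untl _ _ k φ₁ φ₂ =>
      {c | ∃ ψ : Fin (k + 1) → Val φ₁ → STL N, ∃ σ : Fin (k + 1) → Val φ₂ → STL N,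
           ∃ ξ : Fin (k + 1) → Fin (k + 1) → Val φ₁ → STL N,
        (∀ i, ψ i ∈ Cls b φ₁) ∧ (∀ i, σ i ∈ Cls b φ₂) ∧ (∀ i j, ξ i j ∈ Cls b φ₁) ∧
        c = fun θ => iOr fun i : Fin (k + 1) =>
          STL.and
            (STL.untl (θ.1.pts i.castSucc) (θ.1.pts i.succ) (ψ i θ.2.1) (σ i θ.2.2))
            (iAnd fun j : Fin (i : ℕ) =>
              STL.always (θ.1.pts (j.castLE i.isLt.le).castSucc)
                (θ.1.pts (j.castLE i.isLt.le).succ) (ξ i (j.castLE i.isLt.le) θ.2.1))}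

/-- The satisfiable set `S(ψ)` of a class. -/
def SatSet {N : ℕ} (φ : AForm N) (ψ : Val φ → STL N) : Set (Signal N) :=
  {w | ∃ θ : Val φ, Sat w (ψ θ)}

/-- The falsifiable set `V(ψ)` of a class. -/
def VioSet {N : ℕ} (φ : AForm N) (ψ : Val φ → STL N) : Set (Signal N) :=
  {w | ∃ θ : Val φ, Vio w (ψ θ)}

/-
Each satisfaction class `ψ(θ)` under-approximates the robustness of `φ` and each violation
class over-approximates it, pointwise in the signal; both bounds are proved together by
induction on `φ`, negation swapping them. For a temporal operator the class splits `[a, b]`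
into the segments of `θ`, and every `t ∈ [a, b]` lies in some segment. For until, the
violation bound takes the first segment containing `t`: all earlier segments end before `t`,
so (as `a ≥ 0`) they lie in `[0, t)`, where `φ₁` bounds the guards `□ ξ_j` from below.
-/

section

variable {N : ℕ}

theorem robust_listAnd (w : Signal N) :
    ∀ l : List (STL N), robust (listAnd l) w = ⨅ φ ∈ l, robust φ w
  | [] => by simp [listAnd, STL.top, robust]
  | [φ] => by simp [listAnd]
  | φ :: φ' :: rest => by
    simp [listAnd, robust, robust_listAnd w (φ' :: rest), iInf_or, iInf_inf_eq]

theorem robust_listOr (w : Signal N) :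
    ∀ l : List (STL N), robust (listOr l) w = ⨆ φ ∈ l, robust φ w
  | [] => by simp [listOr, robust]
  | [φ] => by simp [listOr]
  | φ :: φ' :: rest => by
    simp [listOr, robust, robust_listOr w (φ' :: rest), iSup_or, iSup_sup_eq]

theorem robust_iAnd {k : ℕ} (f : Fin k → STL N) (w : Signal N) :
    robust (iAnd f) w = ⨅ i, robust (f i) w := by
  rw [iAnd, robust_listAnd]
  simp only [List.mem_ofFn']
  exact iInf_range

theorem robust_iOr {k : ℕ} (f : Fin k → STL N) (w : Signal N) :
    robust (iOr f) w = ⨆ i, robust (f i) w := by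
  rw [iOr, robust_listOr]
  simp only [List.mem_ofFn']
  exact iSup_range

namespace Split

variable {a b : ℝ}

theorem segment_subset {n : ℕ} (s : Split a b n) (i : Fin n) :
    Set.Icc (s.pts i.castSucc) (s.pts i.succ) ⊆ Set.Icc a b := by
  have ha : s.pts 0 ≤ s.pts i.castSucc := s.strictMono.monotone (Fin.zero_le _)
  have hb : s.pts i.succ ≤ s.pts (Fin.last n) := s.strictMono.monotone (Fin.le_last _)
  rw [s.first] at ha
  rw [s.last] at hb
  exact Set.Icc_subset_Icc ha hb

theorem exists_first_segment_mem {k : ℕ} (s : Split a b (k + 1)) {t : ℝ}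
    (ht : t ∈ Set.Icc a b) :
    ∃ i : Fin (k + 1), t ∈ Set.Icc (s.pts i.castSucc) (s.pts i.succ) ∧
      ∀ j < i, s.pts j.succ < t := by
  obtain ⟨i, hi, hmin⟩ := (wellFounded_lt (α := Fin (k + 1))).has_min
    {i : Fin (k + 1) | t ≤ s.pts i.succ}
    ⟨Fin.last k, by simpa [Fin.succ_last, s.last] using ht.2⟩
  have hbefore : ∀ j < i, s.pts j.succ < t := fun j hj => not_le.mp fun h => hmin j h hj
  refine ⟨i, ⟨?_, hi⟩, hbefore⟩
  cases i using Fin.cases with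
  | zero => simpa [s.first] using ht.1
  | succ j =>
    rw [← Fin.succ_castSucc]
    exact (hbefore j.castSucc Fin.castSucc_lt_succ).le

end Split

section Segments

variable {a b : ℝ} {n : ℕ}

def splitAlways (s : Split a b n) (ψ : Fin n → STL N) : STL N :=
  iAnd fun i => .always (s.pts i.castSucc) (s.pts i.succ) (ψ i)

def splitEvent (s : Split a b n) (ψ : Fin n → STL N) : STL N :=
  iOr fun i => .event (s.pts i.castSucc) (s.pts i.succ) (ψ i)

def splitUntil (s : Split a b n) (ψ σ : Fin n → STL N) (ξ : Fin n → Fin n → STL N) :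
    STL N :=
  iOr fun i => .and (.untl (s.pts i.castSucc) (s.pts i.succ) (ψ i) (σ i))
    (iAnd fun j : Fin i => .always (s.pts (j.castLE i.isLt.le).castSucc)
      (s.pts (j.castLE i.isLt.le).succ) (ξ i (j.castLE i.isLt.le)))

variable {φ φ₁ φ₂ : STL N} {ψ σ : Fin n → STL N}

theorem robust_splitAlways_le {k : ℕ} (s : Split a b (k + 1)) {ψ : Fin (k + 1) → STL N}
    (h : ∀ i w, robust (ψ i) w ≤ robust φ w) (w : Signal N) :
    robust (splitAlways s ψ) w ≤ robust (.always a b φ) w := by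
  simp only [splitAlways, robust_iAnd, robust]
  refine le_iInf fun ⟨t, ht⟩ => ?_
  obtain ⟨i, hi, -⟩ := s.exists_first_segment_mem ht
  exact iInf_le_of_le i (iInf_le_of_le ⟨t, hi⟩ (h i _))

theorem robust_always_le_splitAlways (s : Split a b n)
    (h : ∀ i w, robust φ w ≤ robust (ψ i) w) (w : Signal N) :
    robust (.always a b φ) w ≤ robust (splitAlways s ψ) w := by
  simp only [splitAlways, robust_iAnd, robust]
  exact le_iInf fun i => le_iInf fun ⟨t, ht⟩ =>
    iInf_le_of_le ⟨t, s.segment_subset i ht⟩ (h i _)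

theorem robust_splitEvent_le (s : Split a b n)
    (h : ∀ i w, robust (ψ i) w ≤ robust φ w) (w : Signal N) :
    robust (splitEvent s ψ) w ≤ robust (.event a b φ) w := by
  simp only [splitEvent, robust_iOr, robust]
  exact iSup_le fun i => iSup_le fun ⟨t, ht⟩ =>
    le_iSup_of_le ⟨t, s.segment_subset i ht⟩ (h i _)

theorem robust_event_le_splitEvent {k : ℕ} (s : Split a b (k + 1)) {ψ : Fin (k + 1) → STL N}
    (h : ∀ i w, robust φ w ≤ robust (ψ i) w) (w : Signal N) :
    robust (.event a b φ) w ≤ robust (splitEvent s ψ) w := by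
  simp only [splitEvent, robust_iOr, robust]
  refine iSup_le fun ⟨t, ht⟩ => ?_
  obtain ⟨i, hi, -⟩ := s.exists_first_segment_mem ht
  exact le_iSup_of_le i (le_iSup_of_le ⟨t, hi⟩ (h i _))

theorem robust_splitUntil_le (s : Split a b n) (hψ : ∀ i w, robust (ψ i) w ≤ robust φ₁ w)
    (hσ : ∀ i w, robust (σ i) w ≤ robust φ₂ w) (ξ : Fin n → Fin n → STL N) (w : Signal N) :
    robust (splitUntil s ψ σ ξ) w ≤ robust (.untl a b φ₁ φ₂) w := by
  simp only [splitUntil, robust_iOr, robust]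
  exact iSup_le fun i => (min_le_left _ _).trans <| iSup_le fun ⟨t, ht⟩ =>
    le_iSup_of_le ⟨t, s.segment_subset i ht⟩
      (min_le_min (hσ i _) (iInf_mono fun _ => hψ i _))

theorem robust_untl_le_splitUntil (ha : 0 ≤ a) {k : ℕ} (s : Split a b (k + 1))
    {ψ σ : Fin (k + 1) → STL N} {ξ : Fin (k + 1) → Fin (k + 1) → STL N}
    (hψ : ∀ i w, robust φ₁ w ≤ robust (ψ i) w) (hσ : ∀ i w, robust φ₂ w ≤ robust (σ i) w)
    (hξ : ∀ i j w, robust φ₁ w ≤ robust (ξ i j) w) (w : Signal N) :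
    robust (.untl a b φ₁ φ₂) w ≤ robust (splitUntil s ψ σ ξ) w := by
  simp only [splitUntil, robust_iOr, robust_iAnd, robust]
  refine iSup_le fun ⟨t, ht⟩ => ?_
  obtain ⟨i, hi, hbefore⟩ := s.exists_first_segment_mem ht
  refine le_iSup_of_le i (le_min ?_ ?_)
  · exact le_iSup_of_le ⟨t, hi⟩ (min_le_min (hσ i _) (iInf_mono fun _ => hψ i _))
  · refine le_iInf fun j => le_iInf fun ⟨t', ht'⟩ =>
      (min_le_right _ _).trans (iInf_le_of_le ⟨t', ?_, ?_⟩ (hξ i _ _))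
    · exact ha.trans (s.segment_subset _ ht').1
    · exact ht'.2.trans_lt (hbefore _ j.isLt)

end Segments

theorem robust_cls_bounds (φ : AForm N) (hφ : φ.WF) :
    (∀ ψ ∈ Cls true φ, ∀ θ w, robust (ψ θ) w ≤ robust φ.toSTL w) ∧
    (∀ ψ ∈ Cls false φ, ∀ θ w, robust φ.toSTL w ≤ robust (ψ θ) w) := by
  induction φ with
  | atom f =>
    refine ⟨?_, ?_⟩ <;> rintro ψ (rfl | rfl) θ w <;> simp [AForm.toSTL, robust, STL.top]
  | falsum => exact ⟨by rintro ψ rfl θ w; rfl, by rintro ψ rfl θ w; rfl⟩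
  | not φ ih =>
    obtain ⟨ihSat, ihVio⟩ := ih hφ
    refine ⟨?_, ?_⟩ <;> rintro _ ⟨ψ, hψ, rfl⟩ θ w <;> apply EReal.neg_le_neg_iff.mpr
    exacts [ihVio ψ hψ θ w, ihSat ψ hψ θ w]
  | and φ₁ φ₂ ih₁ ih₂ =>
    obtain ⟨ihSat₁, ihVio₁⟩ := ih₁ hφ.1
    obtain ⟨ihSat₂, ihVio₂⟩ := ih₂ hφ.2
    refine ⟨?_, ?_⟩ <;> rintro _ ⟨ψ₁, hψ₁, ψ₂, hψ₂, rfl⟩ ⟨θ₁, θ₂⟩ w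
    · exact min_le_min (ihSat₁ ψ₁ hψ₁ θ₁ w) (ihSat₂ ψ₂ hψ₂ θ₂ w)
    · exact min_le_min (ihVio₁ ψ₁ hψ₁ θ₁ w) (ihVio₂ ψ₂ hψ₂ θ₂ w)
  | or φ₁ φ₂ ih₁ ih₂ =>
    obtain ⟨ihSat₁, ihVio₁⟩ := ih₁ hφ.1
    obtain ⟨ihSat₂, ihVio₂⟩ := ih₂ hφ.2
    refine ⟨?_, ?_⟩ <;> rintro _ ⟨ψ₁, hψ₁, ψ₂, hψ₂, rfl⟩ ⟨θ₁, θ₂⟩ w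
    · exact max_le_max (ihSat₁ ψ₁ hψ₁ θ₁ w) (ihSat₂ ψ₂ hψ₂ θ₂ w)
    · exact max_le_max (ihVio₁ ψ₁ hψ₁ θ₁ w) (ihVio₂ ψ₂ hψ₂ θ₂ w)
  | always a b k φ ih =>
    obtain ⟨ihSat, ihVio⟩ := ih hφ.2.2
    refine ⟨?_, ?_⟩ <;> rintro _ ⟨ψ, hψ, rfl⟩ ⟨s, θ⟩ w
    · exact robust_splitAlways_le s (fun i => ihSat _ (hψ i) θ) w
    · exact robust_always_le_splitAlways s (fun i => ihVio _ (hψ i) θ) w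
  | event a b k φ ih =>
    obtain ⟨ihSat, ihVio⟩ := ih hφ.2.2
    refine ⟨?_, ?_⟩ <;> rintro _ ⟨ψ, hψ, rfl⟩ ⟨s, θ⟩ w
    · exact robust_splitEvent_le s (fun i => ihSat _ (hψ i) θ) w
    · exact robust_event_le_splitEvent s (fun i => ihVio _ (hψ i) θ) w
  | untl a b k φ₁ φ₂ ih₁ ih₂ =>
    obtain ⟨ha, -, hφ₁, hφ₂⟩ := hφ
    obtain ⟨ihSat₁, ihVio₁⟩ := ih₁ hφ₁
    obtain ⟨ihSat₂, ihVio₂⟩ := ih₂ hφ₂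
    refine ⟨?_, ?_⟩ <;> rintro _ ⟨ψ, σ, ξ, hψ, hσ, hξ, rfl⟩ ⟨s, θ₁, θ₂⟩ w
    · exact robust_splitUntil_le s (fun i => ihSat₁ _ (hψ i) θ₁)
        (fun i => ihSat₂ _ (hσ i) θ₂) (fun i j => ξ i j θ₁) w
    · exact robust_untl_le_splitUntil ha s (fun i => ihVio₁ _ (hψ i) θ₁)
        (fun i => ihVio₂ _ (hσ i) θ₂) (fun i j => ihVio₁ _ (hξ i j) θ₁) w

end

/-- Soundness of satisfaction classes (Lemma 1, satisfaction part): if `ψ ∈ Cls⁺(φ)`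
and `w ∈ S(ψ)`, i.e. `w ⊨ ψ(θ)` for some valuation `θ ∈ Θ`, then `w ⊨ φ`. -/
theorem sat_class_sound {N : ℕ} (φ : AForm N) (hφ : φ.WF)
    (ψ : Val φ → STL N) (hψ : ψ ∈ Cls true φ) (w : Signal N)
    (hw : ∃ θ : Val φ, Sat w (ψ θ)) : Sat w φ.toSTL := by
  obtain ⟨θ, hθ⟩ := hw
  exact hθ.trans_le ((robust_cls_bounds φ hφ).1 ψ hψ θ w)

end STLClass
end

section
/- Soundness of violation classes (Lemma 1, violation part): Let φ be an STL formula with a classification criterion fixed as in the context, let ψ ∈ Cls⁻(φ) be a violation class, and let w be a signal. If w ∈ V(ψ), i.e. there exists a valuation θ ∈ Θ such that w ⊭ ψ(θ), then w ⊭ φ. -/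
namespace STLClass

-- ===== auxiliary lemmas =====

lemma robust_top {N : ℕ} (w : Signal N) : robust (STL.top : STL N) w = ⊤ := by
  simp [STL.top, robust]

lemma robust_listAnd_le {N : ℕ} (w : Signal N) :
    ∀ (l : List (STL N)) (φ : STL N), φ ∈ l → robust (listAnd l) w ≤ robust φ w
  | [φ'], φ, h => by
      simp only [List.mem_singleton] at h; subst h; exact le_rfl
  | φ' :: φ'' :: rest, φ, h => by
      rcases List.mem_cons.mp h with h | h
      · subst h; exact min_le_left _ _
      · exact le_trans (min_le_right _ _) (robust_listAnd_le w (φ'' :: rest) φ h)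

lemma le_robust_listAnd {N : ℕ} (w : Signal N) :
    ∀ (l : List (STL N)) (x : EReal), (∀ φ ∈ l, x ≤ robust φ w) → x ≤ robust (listAnd l) w
  | [], x, _ => by rw [show listAnd ([] : List (STL N)) = STL.top from rfl, robust_top]; exact le_top
  | [φ'], x, h => h φ' (by simp)
  | φ' :: φ'' :: rest, x, h => by
      refine le_min (h φ' (by simp)) ?_
      exact le_robust_listAnd w (φ'' :: rest) x fun φ hφ => h φ (List.mem_cons_of_mem _ hφ)

lemma le_robust_listOr {N : ℕ} (w : Signal N) :
    ∀ (l : List (STL N)) (φ : STL N), φ ∈ l → robust φ w ≤ robust (listOr l) w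
  | [φ'], φ, h => by
      simp only [List.mem_singleton] at h; subst h; exact le_rfl
  | φ' :: φ'' :: rest, φ, h => by
      rcases List.mem_cons.mp h with h | h
      · subst h; exact le_max_left _ _
      · exact le_trans (le_robust_listOr w (φ'' :: rest) φ h) (le_max_right _ _)

lemma robust_listOr_le {N : ℕ} (w : Signal N) :
    ∀ (l : List (STL N)) (x : EReal), (∀ φ ∈ l, robust φ w ≤ x) → robust (listOr l) w ≤ x
  | [], x, _ => bot_le
  | [φ'], x, h => h φ' (by simp)
  | φ' :: φ'' :: rest, x, h => by
      refine max_le (h φ' (by simp)) ?_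
      exact robust_listOr_le w (φ'' :: rest) x fun φ hφ => h φ (List.mem_cons_of_mem _ hφ)

lemma robust_iAnd_le {N k : ℕ} (w : Signal N) (f : Fin k → STL N) (i : Fin k) :
    robust (iAnd f) w ≤ robust (f i) w :=
  robust_listAnd_le w _ _ (by rw [List.mem_ofFn]; exact ⟨i, rfl⟩)

lemma le_robust_iAnd {N k : ℕ} (w : Signal N) (f : Fin k → STL N) (x : EReal)
    (h : ∀ i, x ≤ robust (f i) w) : x ≤ robust (iAnd f) w :=
  le_robust_listAnd w _ x (by
    intro φ hφ
    rw [List.mem_ofFn] at hφ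
    obtain ⟨i, rfl⟩ := hφ
    exact h i)

lemma le_robust_iOr {N k : ℕ} (w : Signal N) (f : Fin k → STL N) (i : Fin k) :
    robust (f i) w ≤ robust (iOr f) w :=
  le_robust_listOr w _ _ (by rw [List.mem_ofFn]; exact ⟨i, rfl⟩)

lemma robust_iOr_le {N k : ℕ} (w : Signal N) (f : Fin k → STL N) (x : EReal)
    (h : ∀ i, robust (f i) w ≤ x) : robust (iOr f) w ≤ x :=
  robust_listOr_le w _ x (by
    intro φ hφ
    rw [List.mem_ofFn] at hφ
    obtain ⟨i, rfl⟩ := hφ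
    exact h i)

lemma Split.pts_mono {a b : ℝ} {n : ℕ} (s : Split a b n) : Monotone s.pts :=
  s.strictMono.monotone

/-- Every point of `[a, b]` lies in the minimal segment of the split containing it. -/
lemma Split.exists_seg {a b : ℝ} {n : ℕ} (s : Split a b (n + 1)) {t : ℝ}
    (h1 : a ≤ t) (h2 : t ≤ b) :
    ∃ i : Fin (n + 1), s.pts i.castSucc ≤ t ∧ t ≤ s.pts i.succ ∧
      ∀ j : Fin (n + 1), j < i → s.pts j.succ < t := by
  classical
  set F : Finset (Fin (n + 1)) := Finset.univ.filter (fun i => t ≤ s.pts i.succ) with hF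
  have hne : F.Nonempty := by
    refine ⟨Fin.last n, ?_⟩
    simp only [hF, Finset.mem_filter, Finset.mem_univ, true_and]
    have : (Fin.last n).succ = Fin.last (n + 1) := by
      ext; simp [Fin.val_succ]
    rw [this, s.last]; exact h2
  set i := F.min' hne with hi
  have hiF : i ∈ F := F.min'_mem hne
  have hit : t ≤ s.pts i.succ := by
    simpa only [hF, Finset.mem_filter, Finset.mem_univ, true_and] using hiF
  have hmin : ∀ j : Fin (n + 1), j < i → s.pts j.succ < t := by
    intro j hj
    by_contra hle
    push_neg at hle
    have : j ∈ F := by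
      simp only [hF, Finset.mem_filter, Finset.mem_univ, true_and]; exact hle
    exact absurd (F.min'_le j this) (not_le.mpr hj)
  refine ⟨i, ?_, hit, hmin⟩
  rcases Nat.eq_zero_or_pos i.val with h0 | hpos
  · have : i.castSucc = 0 := by ext; simpa using h0
    rw [this, s.first]; exact h1
  · have hjlt : i.val - 1 < n + 1 := by omega
    have hji : (⟨i.val - 1, hjlt⟩ : Fin (n + 1)) < i := by
      simp only [Fin.lt_def]; omega
    have := hmin ⟨i.val - 1, hjlt⟩ hji
    have heq : (⟨i.val - 1, hjlt⟩ : Fin (n + 1)).succ = i.castSucc := by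
      ext; simp [Fin.val_succ]; omega
    rw [heq] at this
    exact this.le

/-- Core lemma: for satisfaction classes the robustness of an instance is a lower
bound on the robustness of the formula; for violation classes it is an upper bound. -/
lemma cls_robust {N : ℕ} : ∀ (φ : AForm N) (b : Bool) (ψ : Val φ → STL N),
    φ.WF → ψ ∈ Cls b φ → ∀ (θ : Val φ) (w : Signal N),
    (b = true → robust (ψ θ) w ≤ robust φ.toSTL w) ∧
    (b = false → robust φ.toSTL w ≤ robust (ψ θ) w) := by
  intro φ
  induction φ with
  | atom f =>
      intro b ψ _ hψ θ w
      rcases hψ with rfl | rfl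
      · cases b with
        | true =>
            refine ⟨fun _ => ?_, fun h => by simp at h⟩
            simp only [if_pos]
            exact bot_le
        | false =>
            refine ⟨fun h => by simp at h, fun _ => ?_⟩
            simp only [if_neg]
            rw [show robust (if false = true then STL.falsum else STL.top) w
                  = robust (STL.top : STL N) w from rfl, robust_top]
            exact le_top
      · exact ⟨fun _ => le_rfl, fun _ => le_rfl⟩
  | falsum =>
      intro b ψ _ hψ θ w
      rcases hψ with rfl
      exact ⟨fun _ => le_rfl, fun _ => le_rfl⟩
  | not φ ih =>
      intro b ψ hwf hψ θ w
      obtain ⟨ψ', hψ', rfl⟩ := hψ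
      have ih' := ih (!b) ψ' hwf hψ' θ w
      cases b with
      | true =>
          refine ⟨fun _ => ?_, fun h => by simp at h⟩
          exact EReal.neg_le_neg_iff.mpr (ih'.2 rfl)
      | false =>
          refine ⟨fun h => by simp at h, fun _ => ?_⟩
          exact EReal.neg_le_neg_iff.mpr (ih'.1 rfl)
  | and φ₁ φ₂ ih₁ ih₂ =>
      intro b ψ hwf hψ θ w
      obtain ⟨ψ₁, hψ₁, ψ₂, hψ₂, rfl⟩ := hψ
      have h1 := ih₁ b ψ₁ hwf.1 hψ₁ θ.1 w
      have h2 := ih₂ b ψ₂ hwf.2 hψ₂ θ.2 w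
      exact ⟨fun hb => min_le_min (h1.1 hb) (h2.1 hb),
             fun hb => min_le_min (h1.2 hb) (h2.2 hb)⟩
  | or φ₁ φ₂ ih₁ ih₂ =>
      intro b ψ hwf hψ θ w
      obtain ⟨ψ₁, hψ₁, ψ₂, hψ₂, rfl⟩ := hψ
      have h1 := ih₁ b ψ₁ hwf.1 hψ₁ θ.1 w
      have h2 := ih₂ b ψ₂ hwf.2 hψ₂ θ.2 w
      exact ⟨fun hb => max_le_max (h1.1 hb) (h2.1 hb),
             fun hb => max_le_max (h1.2 hb) (h2.2 hb)⟩
  | always a b' k φ ih =>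
      intro b ψ hwf hψ θ w
      obtain ⟨ψs, hψs, rfl⟩ := hψ
      obtain ⟨ha, hab, hwf'⟩ := hwf
      have hfirst : θ.1.pts 0 = a := θ.1.first
      have hlast : θ.1.pts (Fin.last (k + 1)) = b' := θ.1.last
      constructor
      · rintro rfl
        refine le_iInf ?_
        rintro ⟨t, ht⟩
        obtain ⟨i, hil, hiu, -⟩ := θ.1.exists_seg ht.1 ht.2
        refine le_trans (robust_iAnd_le w _ i) ?_
        refine le_trans (iInf_le _ (⟨t, hil, hiu⟩ : Set.Icc (θ.1.pts i.castSucc) (θ.1.pts i.succ))) ?_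
        exact (ih true (ψs i) hwf' (hψs i) θ.2 (shift w t)).1 rfl
      · rintro rfl
        refine le_robust_iAnd w _ _ ?_
        intro i
        refine le_iInf ?_
        rintro ⟨t, ht⟩
        have htmem : t ∈ Set.Icc a b' := by
          constructor
          · rw [← hfirst]; exact le_trans (θ.1.pts_mono (Fin.zero_le _)) ht.1
          · rw [← hlast]; exact le_trans ht.2 (θ.1.pts_mono (Fin.le_last _))
        refine le_trans (iInf_le _ (⟨t, htmem⟩ : Set.Icc a b')) ?_
        exact (ih false (ψs i) hwf' (hψs i) θ.2 (shift w t)).2 rfl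
  | event a b' k φ ih =>
      intro b ψ hwf hψ θ w
      obtain ⟨ψs, hψs, rfl⟩ := hψ
      obtain ⟨ha, hab, hwf'⟩ := hwf
      have hfirst : θ.1.pts 0 = a := θ.1.first
      have hlast : θ.1.pts (Fin.last (k + 1)) = b' := θ.1.last
      constructor
      · rintro rfl
        refine robust_iOr_le w _ _ ?_
        intro i
        refine iSup_le ?_
        rintro ⟨t, ht⟩
        have htmem : t ∈ Set.Icc a b' := by
          constructor
          · rw [← hfirst]; exact le_trans (θ.1.pts_mono (Fin.zero_le _)) ht.1
          · rw [← hlast]; exact le_trans ht.2 (θ.1.pts_mono (Fin.le_last _))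
        refine le_trans ?_ (le_iSup _ (⟨t, htmem⟩ : Set.Icc a b'))
        exact (ih true (ψs i) hwf' (hψs i) θ.2 (shift w t)).1 rfl
      · rintro rfl
        refine iSup_le ?_
        rintro ⟨t, ht⟩
        obtain ⟨i, hil, hiu, -⟩ := θ.1.exists_seg ht.1 ht.2
        refine le_trans ?_ (le_robust_iOr w _ i)
        refine le_trans ?_ (le_iSup _ (⟨t, hil, hiu⟩ : Set.Icc (θ.1.pts i.castSucc) (θ.1.pts i.succ)))
        exact (ih false (ψs i) hwf' (hψs i) θ.2 (shift w t)).2 rfl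
  | untl a b' k φ₁ φ₂ ih₁ ih₂ =>
      intro b ψ hwf hψ θ w
      obtain ⟨ψs, σs, ξs, hψs, hσs, hξs, rfl⟩ := hψ
      obtain ⟨ha, hab, hwf₁, hwf₂⟩ := hwf
      have hfirst : θ.1.pts 0 = a := θ.1.first
      have hlast : θ.1.pts (Fin.last (k + 1)) = b' := θ.1.last
      constructor
      · rintro rfl
        refine robust_iOr_le w _ _ ?_
        intro i
        refine le_trans (min_le_left _ _) ?_
        refine iSup_le ?_
        rintro ⟨t, ht⟩
        have htmem : t ∈ Set.Icc a b' := by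
          constructor
          · rw [← hfirst]; exact le_trans (θ.1.pts_mono (Fin.zero_le _)) ht.1
          · rw [← hlast]; exact le_trans ht.2 (θ.1.pts_mono (Fin.le_last _))
        refine le_trans ?_ (le_iSup _ (⟨t, htmem⟩ : Set.Icc a b'))
        refine min_le_min ?_ ?_
        · exact (ih₂ true (σs i) hwf₂ (hσs i) θ.2.2 (shift w t)).1 rfl
        · exact iInf_mono fun t' =>
            (ih₁ true (ψs i) hwf₁ (hψs i) θ.2.1 (shift w t'.1)).1 rfl
      · rintro rfl
        refine iSup_le ?_
        rintro ⟨t, ht⟩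
        obtain ⟨i, hil, hiu, hminseg⟩ := θ.1.exists_seg ht.1 ht.2
        refine le_trans ?_ (le_robust_iOr w _ i)
        refine le_min ?_ ?_
        · refine le_trans ?_
            (le_iSup _ (⟨t, hil, hiu⟩ : Set.Icc (θ.1.pts i.castSucc) (θ.1.pts i.succ)))
          refine min_le_min ?_ ?_
          · exact (ih₂ false (σs i) hwf₂ (hσs i) θ.2.2 (shift w t)).2 rfl
          · exact iInf_mono fun t' =>
              (ih₁ false (ψs i) hwf₁ (hψs i) θ.2.1 (shift w t'.1)).2 rfl
        · refine le_robust_iAnd w _ _ ?_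
          intro j
          refine le_iInf ?_
          rintro ⟨s, hs⟩
          have hji : (j.castLE i.isLt.le) < i := by
            simp only [Fin.lt_def, Fin.coe_castLE]; exact j.isLt
          have hs0 : 0 ≤ s := by
            refine le_trans ha ?_
            rw [← hfirst]
            exact le_trans (θ.1.pts_mono (Fin.zero_le _)) hs.1
          have hst : s < t := lt_of_le_of_lt hs.2 (hminseg _ hji)
          refine le_trans (min_le_right _ _) ?_
          refine le_trans (iInf_le _ (⟨s, hs0, hst⟩ : Set.Ico (0:ℝ) t)) ?_
          exact (ih₁ false (ξs i (j.castLE i.isLt.le)) hwf₁ (hξs i _) θ.2.1 (shift w s)).2 rfl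

/-- Soundness of violation classes (Lemma 1, violation part): if `ψ ∈ Cls⁻(φ)`
and `w ∈ V(ψ)`, i.e. `w ⊭ ψ(θ)` for some valuation `θ ∈ Θ`, then `w ⊭ φ`. -/
theorem vio_class_sound {N : ℕ} (φ : AForm N) (hφ : φ.WF)
    (ψ : Val φ → STL N) (hψ : ψ ∈ Cls false φ) (w : Signal N)
    (hw : ∃ θ : Val φ, Vio w (ψ θ)) : Vio w φ.toSTL := by
  obtain ⟨θ, hθ⟩ := hw
  exact lt_of_le_of_lt ((cls_robust φ false ψ hφ hψ θ w).2 rfl) hθ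

end STLClass
end

section
/- Order identification for satisfaction classes (Lemma 4, satisfaction part): Let φ be an STL formula with a classification criterion fixed as in the context. If (ψ, σ) ∈ ⪯⁺(φ), then the satisfiable sets satisfy S(ψ) ⊆ S(σ), i.e. every signal w for which there exists θ ∈ Θ with w ⊨ ψ(θ) also admits some θ' ∈ Θ with w ⊨ σ(θ'). -/
namespace STLClass

/-- `Pre true φ` is the relation `⪯⁺(φ)` and `Pre false φ` is the relation `⪯⁻(φ)`,
given as sets of pairs of classes. -/
def Pre {N : ℕ} : Bool → (φ : AForm N) → Set ((Val φ → STL N) × (Val φ → STL N))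
  | b, .atom f =>
      { (fun _ => if b then STL.falsum else STL.top, fun _ => STL.atom f),
        (fun _ => STL.atom f, fun _ => STL.atom f),
        (fun _ => if b then STL.falsum else STL.top,
         fun _ => if b then STL.falsum else STL.top) }
  | _, .falsum => {(fun _ => STL.falsum, fun _ => STL.falsum)}
  | b, .not φ =>
      {p | ∃ q ∈ Pre (!b) φ,
        p = (fun θ => STL.not (q.1 θ), fun θ => STL.not (q.2 θ))}
  | b, .and φ₁ φ₂ =>
      {p | ∃ q₁ ∈ Pre b φ₁, ∃ q₂ ∈ Pre b φ₂,
        p = (fun θ => STL.and (q₁.1 θ.1) (q₂.1 θ.2),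
             fun θ => STL.and (q₁.2 θ.1) (q₂.2 θ.2))}
  | b, .or φ₁ φ₂ =>
      {p | ∃ q₁ ∈ Pre b φ₁, ∃ q₂ ∈ Pre b φ₂,
        p = (fun θ => STL.or (q₁.1 θ.1) (q₂.1 θ.2),
             fun θ => STL.or (q₁.2 θ.1) (q₂.2 θ.2))}
  | b, .always _ _ k φ =>
      {p | ∃ ψ σ : Fin (k + 1) → Val φ → STL N, (∀ i, (ψ i, σ i) ∈ Pre b φ) ∧
        p = (fun θ => iAnd fun i : Fin (k + 1) =>
               STL.always (θ.1.pts i.castSucc) (θ.1.pts i.succ) (ψ i θ.2),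
             fun θ => iAnd fun i : Fin (k + 1) =>
               STL.always (θ.1.pts i.castSucc) (θ.1.pts i.succ) (σ i θ.2))}
  | b, .event _ _ k φ =>
      {p | ∃ ψ σ : Fin (k + 1) → Val φ → STL N, (∀ i, (ψ i, σ i) ∈ Pre b φ) ∧
        p = (fun θ => iOr fun i : Fin (k + 1) =>
               STL.event (θ.1.pts i.castSucc) (θ.1.pts i.succ) (ψ i θ.2),
             fun θ => iOr fun i : Fin (k + 1) =>
               STL.event (θ.1.pts i.castSucc) (θ.1.pts i.succ) (σ i θ.2))}
  | b, .untl _ _ k φ₁ φ₂ =>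
      {p | ∃ ψ ψ' : Fin (k + 1) → Val φ₁ → STL N,
           ∃ σ σ' : Fin (k + 1) → Val φ₂ → STL N,
           ∃ ξ ξ' : Fin (k + 1) → Fin (k + 1) → Val φ₁ → STL N,
        (∀ i, (ψ i, ψ' i) ∈ Pre b φ₁) ∧ (∀ i, (σ i, σ' i) ∈ Pre b φ₂) ∧
        (∀ i j, (ξ i j, ξ' i j) ∈ Pre b φ₁) ∧
        p = (fun θ => iOr fun i : Fin (k + 1) =>
               STL.and
                 (STL.untl (θ.1.pts i.castSucc) (θ.1.pts i.succ) (ψ i θ.2.1) (σ i θ.2.2))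
                 (iAnd fun j : Fin (i : ℕ) =>
                   STL.always (θ.1.pts (j.castLE i.isLt.le).castSucc)
                     (θ.1.pts (j.castLE i.isLt.le).succ) (ξ i (j.castLE i.isLt.le) θ.2.1)),
             fun θ => iOr fun i : Fin (k + 1) =>
               STL.and
                 (STL.untl (θ.1.pts i.castSucc) (θ.1.pts i.succ) (ψ' i θ.2.1) (σ' i θ.2.2))
                 (iAnd fun j : Fin (i : ℕ) =>
                   STL.always (θ.1.pts (j.castLE i.isLt.le).castSucc)
                     (θ.1.pts (j.castLE i.isLt.le).succ) (ξ' i (j.castLE i.isLt.le) θ.2.1)))}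


/-- Ordering in direction `b`. -/
def EKey (b : Bool) (x y : EReal) : Prop := if b then x ≤ y else y ≤ x

lemma EKey.refl (b : Bool) (x : EReal) : EKey b x x := by cases b <;> simp [EKey]

lemma EKey.min' {b : Bool} {x₁ x₂ y₁ y₂ : EReal} (h₁ : EKey b x₁ y₁) (h₂ : EKey b x₂ y₂) :
    EKey b (min x₁ x₂) (min y₁ y₂) := by
  cases b <;> simp only [EKey, if_true, if_false] at * <;> exact min_le_min h₁ h₂

lemma EKey.max' {b : Bool} {x₁ x₂ y₁ y₂ : EReal} (h₁ : EKey b x₁ y₁) (h₂ : EKey b x₂ y₂) :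
    EKey b (max x₁ x₂) (max y₁ y₂) := by
  cases b <;> simp only [EKey, if_true, if_false] at * <;> exact max_le_max h₁ h₂

lemma EKey.neg' {b : Bool} {x y : EReal} (h : EKey (!b) x y) : EKey b (-x) (-y) := by
  cases b <;> simp only [EKey, Bool.not_true, Bool.not_false, if_true, if_false] at * <;>
    exact EReal.neg_le_neg_iff.mpr h

lemma EKey.iInf' {b : Bool} {ι : Sort*} {f g : ι → EReal}
    (h : ∀ i, EKey b (f i) (g i)) : EKey b (⨅ i, f i) (⨅ i, g i) := by
  cases b <;> simp only [EKey, if_true, if_false] at * <;> exact iInf_mono h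

lemma EKey.iSup' {b : Bool} {ι : Sort*} {f g : ι → EReal}
    (h : ∀ i, EKey b (f i) (g i)) : EKey b (⨆ i, f i) (⨆ i, g i) := by
  cases b <;> simp only [EKey, if_true, if_false] at * <;> exact iSup_mono h

lemma listAnd_key {N : ℕ} {b : Bool} {w : Signal N} :
    ∀ {l₁ l₂ : List (STL N)},
      List.Forall₂ (fun a c => EKey b (robust a w) (robust c w)) l₁ l₂ →
      EKey b (robust (listAnd l₁) w) (robust (listAnd l₂) w) := by
  intro l₁ l₂ h
  induction h with
  | nil => exact EKey.refl b _
  | @cons a c l l' h₁ h₂ ih =>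
    cases h₂ with
    | nil => simpa [listAnd] using h₁
    | cons h₂ h₃ =>
      simp only [listAnd, robust]
      exact EKey.min' h₁ ih

lemma listOr_key {N : ℕ} {b : Bool} {w : Signal N} :
    ∀ {l₁ l₂ : List (STL N)},
      List.Forall₂ (fun a c => EKey b (robust a w) (robust c w)) l₁ l₂ →
      EKey b (robust (listOr l₁) w) (robust (listOr l₂) w) := by
  intro l₁ l₂ h
  induction h with
  | nil => exact EKey.refl b _
  | @cons a c l l' h₁ h₂ ih =>
    cases h₂ with
    | nil => simpa [listOr] using h₁
    | cons h₂ h₃ =>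
      simp only [listOr, robust]
      exact EKey.max' h₁ ih

lemma forall₂_ofFn {N : ℕ} {b : Bool} {w : Signal N} :
    ∀ {k : ℕ} {f g : Fin k → STL N},
      (∀ i, EKey b (robust (f i) w) (robust (g i) w)) →
      List.Forall₂ (fun a c => EKey b (robust a w) (robust c w)) (List.ofFn f) (List.ofFn g) := by
  intro k
  induction k with
  | zero => intro f g _; simp [List.ofFn_zero]
  | succ n ih =>
    intro f g h
    rw [List.ofFn_succ, List.ofFn_succ]
    exact List.Forall₂.cons (h 0) (ih fun i => h i.succ)

lemma iAnd_key {N : ℕ} {b : Bool} {w : Signal N} {k : ℕ} {f g : Fin k → STL N}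
    (h : ∀ i, EKey b (robust (f i) w) (robust (g i) w)) :
    EKey b (robust (iAnd f) w) (robust (iAnd g) w) :=
  listAnd_key (forall₂_ofFn h)

lemma iOr_key {N : ℕ} {b : Bool} {w : Signal N} {k : ℕ} {f g : Fin k → STL N}
    (h : ∀ i, EKey b (robust (f i) w) (robust (g i) w)) :
    EKey b (robust (iOr f) w) (robust (iOr g) w) :=
  listOr_key (forall₂_ofFn h)

lemma pre_key {N : ℕ} (φ : AForm N) :
    ∀ (b : Bool) (p : (Val φ → STL N) × (Val φ → STL N)), p ∈ Pre b φ →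
      ∀ (θ : Val φ) (w : Signal N), EKey b (robust (p.1 θ) w) (robust (p.2 θ) w) := by
  induction φ with
  | atom f =>
    intro b p hp θ w
    rcases hp with hp | hp | hp <;> subst hp <;> cases b <;>
      simp only [EKey, if_true, if_false, robust, STL.top] <;>
      simp [robust]
  | falsum =>
    intro b p hp θ w
    rcases hp with hp
    subst hp
    exact EKey.refl b _
  | not φ ih =>
    intro b p hp θ w
    rcases hp with ⟨q, hq, hp⟩
    subst hp
    exact EKey.neg' (ih (!b) q hq θ w)
  | and φ₁ φ₂ ih₁ ih₂ =>
    intro b p hp θ w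
    rcases hp with ⟨q₁, hq₁, q₂, hq₂, hp⟩
    subst hp
    exact EKey.min' (ih₁ b q₁ hq₁ θ.1 w) (ih₂ b q₂ hq₂ θ.2 w)
  | or φ₁ φ₂ ih₁ ih₂ =>
    intro b p hp θ w
    rcases hp with ⟨q₁, hq₁, q₂, hq₂, hp⟩
    subst hp
    exact EKey.max' (ih₁ b q₁ hq₁ θ.1 w) (ih₂ b q₂ hq₂ θ.2 w)
  | always a b' k φ ih =>
    intro b p hp θ w
    rcases hp with ⟨ψ, σ, hψσ, hp⟩
    subst hp
    refine iAnd_key fun i => ?_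
    simp only [robust]
    exact EKey.iInf' fun t => ih b (ψ i, σ i) (hψσ i) θ.2 _
  | event a b' k φ ih =>
    intro b p hp θ w
    rcases hp with ⟨ψ, σ, hψσ, hp⟩
    subst hp
    refine iOr_key fun i => ?_
    simp only [robust]
    exact EKey.iSup' fun t => ih b (ψ i, σ i) (hψσ i) θ.2 _
  | untl a b' k φ₁ φ₂ ih₁ ih₂ =>
    intro b p hp θ w
    rcases hp with ⟨ψ, ψ', σ, σ', ξ, ξ', hψ, hσ, hξ, hp⟩
    subst hp
    refine iOr_key fun i => ?_
    simp only [robust]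
    refine EKey.min' ?_ ?_
    · exact EKey.iSup' fun t => EKey.min'
        (ih₂ b (σ i, σ' i) (hσ i) θ.2.2 _)
        (EKey.iInf' fun t' => ih₁ b (ψ i, ψ' i) (hψ i) θ.2.1 _)
    · exact iAnd_key fun j => by
        simp only [robust]
        exact EKey.iInf' fun t => ih₁ b (ξ i _, ξ' i _) (hξ i _) θ.2.1 _

/-- Order identification for satisfaction classes (Lemma 4, satisfaction part):
if `(ψ, σ) ∈ ⪯⁺(φ)` then `S(ψ) ⊆ S(σ)`. -/
theorem pre_sat_inclusion {N : ℕ} (φ : AForm N) (hφ : φ.WF)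
    (ψ σ : Val φ → STL N) (h : (ψ, σ) ∈ Pre true φ) :
    SatSet φ ψ ⊆ SatSet φ σ := by
  intro w hw
  rcases hw with ⟨θ, hθ⟩
  refine ⟨θ, ?_⟩
  have := pre_key φ true (ψ, σ) h θ w
  simp only [EKey, if_true] at this
  exact lt_of_lt_of_le hθ this

end STLClass
end

section
/- Quantitative order identification (pointwise strengthening of Lemma 4 used in its inductive proof): Let φ be an STL formula with a classification criterion fixed as in the context. If (ψ, σ) ∈ ⪯⁺(φ), then for every valuation θ ∈ Θ and every signal w, ρ(w, ψ(θ)) ≤ ρ(w, σ(θ)); and if (ψ, σ) ∈ ⪯⁻(φ), then for every valuation θ ∈ Θ and every signal w, ρ(w, σ(θ)) ≤ ρ(w, ψ(θ)). -/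
namespace STLClass

/-! Robustness is built from `min`, `max`, `⨅`, `⨆`, which are monotone, and negation, which is
antitone. Comparing robustness in the order `SignedLE b`, which negation reverses just as it
exchanges `⪯⁺` and `⪯⁻`, one induction on the formula proves both halves at once. -/

def SignedLE {α : Type*} [LE α] : Bool → α → α → Prop
  | true, x, y => x ≤ y
  | false, x, y => y ≤ x

section SignedLE

variable {α : Type*}

theorem signedLE_refl [Preorder α] (b : Bool) (x : α) : SignedLE b x x := by
  cases b <;> exact le_refl x

theorem signedLE_min [LinearOrder α] {b : Bool} {x y x' y' : α}
    (h : SignedLE b x y) (h' : SignedLE b x' y') : SignedLE b (min x x') (min y y') := by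
  cases b <;> exact min_le_min h h'

theorem signedLE_max [LinearOrder α] {b : Bool} {x y x' y' : α}
    (h : SignedLE b x y) (h' : SignedLE b x' y') : SignedLE b (max x x') (max y y') := by
  cases b <;> exact max_le_max h h'

theorem signedLE_iInf [CompleteLattice α] {ι : Sort*} {b : Bool} {f g : ι → α}
    (h : ∀ i, SignedLE b (f i) (g i)) : SignedLE b (⨅ i, f i) (⨅ i, g i) := by
  cases b <;> exact iInf_mono h

theorem signedLE_iSup [CompleteLattice α] {ι : Sort*} {b : Bool} {f g : ι → α}
    (h : ∀ i, SignedLE b (f i) (g i)) : SignedLE b (⨆ i, f i) (⨆ i, g i) := by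
  cases b <;> exact iSup_mono h

end SignedLE

theorem signedLE_neg {b : Bool} {x y : EReal} (h : SignedLE (!b) x y) :
    SignedLE b (-x) (-y) := by
  cases b <;> exact EReal.neg_le_neg_iff.2 h

theorem _root_.List.forall₂_ofFn {α β : Type*} {R : α → β → Prop} :
    ∀ {k : ℕ} {f : Fin k → α} {g : Fin k → β},
      (∀ i, R (f i) (g i)) → List.Forall₂ R (List.ofFn f) (List.ofFn g)
  | 0, _, _, _ => by simp
  | _ + 1, _, _, h => by
    rw [List.ofFn_succ, List.ofFn_succ]
    exact .cons (h 0) (forall₂_ofFn fun i => h i.succ)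

section Robust

variable {N : ℕ} {b : Bool} {w : Signal N}

theorem signedLE_robust_falsum_or_top (φ : STL N) :
    SignedLE b (robust (if b then STL.falsum else STL.top) w) (robust φ w) := by
  cases b
  exacts [show robust φ w ≤ -⊥ from le_top, show ⊥ ≤ robust φ w from bot_le]

theorem signedLE_robust_listAnd {l₁ l₂ : List (STL N)}
    (h : List.Forall₂ (fun φ ψ => SignedLE b (robust φ w) (robust ψ w)) l₁ l₂) :
    SignedLE b (robust (listAnd l₁) w) (robust (listAnd l₂) w) := by
  induction h with
  | nil => exact signedLE_refl b _
  | cons hhead htail ih =>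
    cases htail with
    | nil => exact hhead
    | cons => exact signedLE_min hhead ih

theorem signedLE_robust_listOr {l₁ l₂ : List (STL N)}
    (h : List.Forall₂ (fun φ ψ => SignedLE b (robust φ w) (robust ψ w)) l₁ l₂) :
    SignedLE b (robust (listOr l₁) w) (robust (listOr l₂) w) := by
  induction h with
  | nil => exact signedLE_refl b _
  | cons hhead htail ih =>
    cases htail with
    | nil => exact hhead
    | cons => exact signedLE_max hhead ih

theorem signedLE_robust_iAnd {k : ℕ} {f g : Fin k → STL N}
    (h : ∀ i, SignedLE b (robust (f i) w) (robust (g i) w)) :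
    SignedLE b (robust (iAnd f) w) (robust (iAnd g) w) :=
  signedLE_robust_listAnd (List.forall₂_ofFn h)

theorem signedLE_robust_iOr {k : ℕ} {f g : Fin k → STL N}
    (h : ∀ i, SignedLE b (robust (f i) w) (robust (g i) w)) :
    SignedLE b (robust (iOr f) w) (robust (iOr g) w) :=
  signedLE_robust_listOr (List.forall₂_ofFn h)

end Robust

theorem signedLE_robust_of_mem_Pre {N : ℕ} (φ : AForm N) :
    ∀ {b : Bool} {ψ σ : Val φ → STL N}, (ψ, σ) ∈ Pre b φ →
      ∀ (θ : Val φ) (w : Signal N), SignedLE b (robust (ψ θ) w) (robust (σ θ) w) := by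
  induction φ with
  | atom f =>
    intro b _ _ h θ w
    rcases h with h | h | h <;> cases h
    exacts [signedLE_robust_falsum_or_top _, signedLE_refl b _, signedLE_refl b _]
  | falsum =>
    rintro b _ _ ⟨⟩ θ w
    exact signedLE_refl b _
  | not φ ih =>
    rintro b _ _ ⟨q, hq, h⟩ θ w
    cases h
    exact signedLE_neg (ih hq θ w)
  | and φ₁ φ₂ ih₁ ih₂ =>
    rintro b _ _ ⟨q₁, hq₁, q₂, hq₂, h⟩ θ w
    cases h
    exact signedLE_min (ih₁ hq₁ θ.1 w) (ih₂ hq₂ θ.2 w)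
  | or φ₁ φ₂ ih₁ ih₂ =>
    rintro b _ _ ⟨q₁, hq₁, q₂, hq₂, h⟩ θ w
    cases h
    exact signedLE_max (ih₁ hq₁ θ.1 w) (ih₂ hq₂ θ.2 w)
  | always _ _ _ φ ih =>
    rintro b _ _ ⟨ψ, σ, hpre, h⟩ θ w
    cases h
    exact signedLE_robust_iAnd fun i => signedLE_iInf fun t => ih (hpre i) θ.2 _
  | event _ _ _ φ ih =>
    rintro b _ _ ⟨ψ, σ, hpre, h⟩ θ w
    cases h
    exact signedLE_robust_iOr fun i => signedLE_iSup fun t => ih (hpre i) θ.2 _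
  | untl _ _ _ φ₁ φ₂ ih₁ ih₂ =>
    rintro b _ _ ⟨ψ, ψ', σ, σ', ξ, ξ', hψ, hσ, hξ, h⟩ θ w
    cases h
    refine signedLE_robust_iOr fun i => signedLE_min ?_ ?_
    · exact signedLE_iSup fun t => signedLE_min (ih₂ (hσ i) θ.2.2 _)
        (signedLE_iInf fun t' => ih₁ (hψ i) θ.2.1 _)
    · exact signedLE_robust_iAnd fun j => signedLE_iInf fun t => ih₁ (hξ i _) θ.2.1 _

theorem pre_quantitative_general {N : ℕ} (φ : AForm N) :
    (∀ ψ σ : Val φ → STL N, (ψ, σ) ∈ Pre true φ →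
      ∀ (θ : Val φ) (w : Signal N), robust (ψ θ) w ≤ robust (σ θ) w) ∧
    (∀ ψ σ : Val φ → STL N, (ψ, σ) ∈ Pre false φ →
      ∀ (θ : Val φ) (w : Signal N), robust (σ θ) w ≤ robust (ψ θ) w) :=
  ⟨fun _ _ h => signedLE_robust_of_mem_Pre φ h, fun _ _ h => signedLE_robust_of_mem_Pre φ h⟩

/-- Quantitative order identification: if `(ψ, σ) ∈ ⪯⁺(φ)` then
`ρ(w, ψ(θ)) ≤ ρ(w, σ(θ))` for every `θ ∈ Θ` and every signal `w`; and if
`(ψ, σ) ∈ ⪯⁻(φ)` then `ρ(w, σ(θ)) ≤ ρ(w, ψ(θ))` for every `θ ∈ Θ` and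
every signal `w`. -/
theorem pre_quantitative {N : ℕ} (φ : AForm N) (hφ : φ.WF) :
    (∀ ψ σ : Val φ → STL N, (ψ, σ) ∈ Pre true φ →
      ∀ (θ : Val φ) (w : Signal N), robust (ψ θ) w ≤ robust (σ θ) w) ∧
    (∀ ψ σ : Val φ → STL N, (ψ, σ) ∈ Pre false φ →
      ∀ (θ : Val φ) (w : Signal N), robust (σ θ) w ≤ robust (ψ θ) w) :=
  pre_quantitative_general φ

end STLClass
end
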